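/- In an approximating Lorentzian pre-length space (with full-support probability measure) that is globally hyperbolic and causally simple (J^±(p) closed for all p), along any past-inextendible causal curve γ imprisoned-free, lim_{s→a} t⁻(γ(s)) = 0, where t⁻ is the averaged past volume function; equivalently, if the limit were positive there would exist a point q with the whole curve contained in J⁺(q), contradicting non-total imprisonment via compactness of J(q, γ(b)). -/

import Mathlib

open Set Filter Topology MeasureTheory TopologicalSpace

/-- A Lorentzian pre-length space structure on a metric space `X`:
a preorder `causal` (≤), a transitive relation `chron` (≪) contained in `causal`,
and a lower semicontinuous time separation function `tau` satisfying the usual axioms. -/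
structure LPLS (X : Type*) [MetricSpace X] where
  causal : X → X → Prop
  chron : X → X → Prop
  tau : X → X → ENNReal
  causal_refl : ∀ x, causal x x
  causal_trans : ∀ {x y z}, causal x y → causal y z → causal x z
  chron_trans : ∀ {x y z}, chron x y → chron y z → chron x z
  chron_subset_causal : ∀ {x y}, chron x y → causal x y
  tau_lsc : LowerSemicontinuous fun p : X × X => tau p.1 p.2
  tau_pos : ∀ {x y}, chron x y → 0 < tau x y
  tau_eq_zero : ∀ {x y}, ¬ causal x y → tau x y = 0
  tau_superadd : ∀ {x y z}, causal x y → causal y z → tau x y + tau y z ≤ tau x z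

variable {X : Type*} [MetricSpace X]

namespace LPLS

/-- chronological future `I⁺(p)` -/
def Iplus (L : LPLS X) (p : X) : Set X := {x | L.chron p x}
/-- chronological past `I⁻(p)` -/
def Iminus (L : LPLS X) (p : X) : Set X := {x | L.chron x p}
/-- causal future `J⁺(p)` -/
def Jplus (L : LPLS X) (p : X) : Set X := {x | L.causal p x}
/-- causal past `J⁻(p)` -/
def Jminus (L : LPLS X) (p : X) : Set X := {x | L.causal x p}

def IplusSet (L : LPLS X) (S : Set X) : Set X := ⋃ p ∈ S, L.Iplus p
def IminusSet (L : LPLS X) (S : Set X) : Set X := ⋃ p ∈ S, L.Iminus p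
def JplusSet (L : LPLS X) (S : Set X) : Set X := ⋃ p ∈ S, L.Jplus p
def JminusSet (L : LPLS X) (S : Set X) : Set X := ⋃ p ∈ S, L.Jminus p

/-- a map is locally Lipschitz on a set `I` -/
def LocLipOn (I : Set ℝ) (γ : ℝ → X) : Prop :=
  ∀ s ∈ I, ∃ K : NNReal, ∃ U ∈ nhdsWithin s I, LipschitzOnWith K γ U

/-- future-directed causal curve with parameter domain `I`:
non-constant, locally Lipschitz and monotone with respect to the causal relation. -/
def IsCausalCurveOn (L : LPLS X) (I : Set ℝ) (γ : ℝ → X) : Prop :=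
  (¬ ∀ s ∈ I, ∀ t ∈ I, γ s = γ t) ∧ LocLipOn I γ ∧
    ∀ ⦃s⦄, s ∈ I → ∀ ⦃t⦄, t ∈ I → s < t → L.causal (γ s) (γ t)

/-- future-directed timelike curve with parameter domain `I`. -/
def IsTimelikeCurveOn (L : LPLS X) (I : Set ℝ) (γ : ℝ → X) : Prop :=
  (¬ ∀ s ∈ I, ∀ t ∈ I, γ s = γ t) ∧ LocLipOn I γ ∧
    ∀ ⦃s⦄, s ∈ I → ∀ ⦃t⦄, t ∈ I → s < t → L.chron (γ s) (γ t)

/-- causal path-connectedness -/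
def CausallyPathConnected (L : LPLS X) : Prop :=
  (∀ p q : X, L.causal p q → p ≠ q →
    ∃ γ : ℝ → X, L.IsCausalCurveOn (Icc 0 1) γ ∧ γ 0 = p ∧ γ 1 = q) ∧
  (∀ p q : X, L.chron p q →
    ∃ γ : ℝ → X, L.IsTimelikeCurveOn (Icc 0 1) γ ∧ γ 0 = p ∧ γ 1 = q)

/-- the relation `≤_U`: connected by a causal curve inside `U` -/
def causalIn (L : LPLS X) (U : Set X) (p q : X) : Prop :=
  ∃ γ : ℝ → X, L.IsCausalCurveOn (Icc 0 1) γ ∧ γ 0 = p ∧ γ 1 = q ∧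
    ∀ s ∈ Icc (0:ℝ) 1, γ s ∈ U

/-- every point has a neighbourhood `U` such that `≤_U` is closed -/
def LocallyWeaklyCausallyClosed (L : LPLS X) : Prop :=
  ∀ p : X, ∃ U ∈ 𝓝 p, IsClosed {z : X × X | L.causalIn U z.1 z.2}

/-- `d`-compatibility: local uniform bound for the `d`-arclength of causal curves -/
def DCompatible (L : LPLS X) : Prop :=
  ∀ p : X, ∃ U ∈ 𝓝 p, ∃ C : ℝ, ∀ (I : Set ℝ) (γ : ℝ → X),
    L.IsCausalCurveOn I γ → (∀ s ∈ I, γ s ∈ U) → eVariationOn γ I ≤ ENNReal.ofReal C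

/-- a Lorentzian pre-length space with limit curves: causally path-connected,
locally weakly causally closed and `d`-compatible -/
def HasLimitCurves (L : LPLS X) : Prop :=
  L.CausallyPathConnected ∧ L.LocallyWeaklyCausallyClosed ∧ L.DCompatible

def FutureApproximating (L : LPLS X) : Prop := ∀ p : X, L.Jplus p ⊆ closure (L.Iplus p)
def PastApproximating (L : LPLS X) : Prop := ∀ p : X, L.Jminus p ⊆ closure (L.Iminus p)
def Approximating (L : LPLS X) : Prop := L.FutureApproximating ∧ L.PastApproximating

/-- non-total imprisonment: a uniform arclength bound for causal curves in any compact set -/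
def NonTotallyImprisoning (L : LPLS X) : Prop :=
  ∀ K : Set X, IsCompact K → ∃ C : ℝ, 0 < C ∧ ∀ (I : Set ℝ) (γ : ℝ → X),
    L.IsCausalCurveOn I γ → (∀ s ∈ I, γ s ∈ K) → eVariationOn γ I ≤ ENNReal.ofReal C

/-- future-inextendible (future-directed) causal curve, parametrized on `[0,∞)`;
by the analogue of [KuSa, Lemma 3.12] inextendibility is captured by the
nonexistence of the limit at `+∞`. -/
def IsFutureInextCurve (L : LPLS X) (γ : ℝ → X) : Prop :=
  L.IsCausalCurveOn (Ici 0) γ ∧ ∀ p : X, ¬ Tendsto γ atTop (𝓝 p)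

/-- past-inextendible (future-directed) causal curve, parametrized on `(-∞,0]`. -/
def IsPastInextCurve (L : LPLS X) (γ : ℝ → X) : Prop :=
  L.IsCausalCurveOn (Iic 0) γ ∧ ∀ p : X, ¬ Tendsto γ atBot (𝓝 p)

/-- doubly-inextendible causal curve, parametrized on all of `ℝ`. -/
def IsDoublyInextCurve (L : LPLS X) (γ : ℝ → X) : Prop :=
  L.IsCausalCurveOn univ γ ∧ (∀ p : X, ¬ Tendsto γ atTop (𝓝 p)) ∧
    (∀ p : X, ¬ Tendsto γ atBot (𝓝 p))

/-- a Cauchy set: every doubly-inextendible causal curve meets it exactly once -/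
def IsCauchySet (L : LPLS X) (S : Set X) : Prop :=
  ∀ γ : ℝ → X, L.IsDoublyInextCurve γ →
    (∃ u : ℝ, γ u ∈ S) ∧ ∀ u v : ℝ, γ u ∈ S → γ v ∈ S → γ u = γ v

/-- volume of the open `r`-thickening of `I⁻(p)` -/
noncomputable def Vminus (L : LPLS X) [MeasurableSpace X] (μ : Measure X) (r : ℝ) (p : X) : ℝ :=
  (μ (Metric.thickening r (L.Iminus p))).toReal

/-- the averaged past volume function `t⁻(p) = ∫₀¹ V⁻ᵣ(p) dr` (without the sign) -/
noncomputable def tminus (L : LPLS X) [MeasurableSpace X] (μ : Measure X) (p : X) : ℝ :=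
  ∫ r in Ioo (0:ℝ) 1, L.Vminus μ r p

/-- full support: every nonempty open set has positive measure -/
def FullSupport [MeasurableSpace X] (μ : Measure X) : Prop :=
  ∀ U : Set X, IsOpen U → U.Nonempty → 0 < μ U

end LPLS

/-!
If `t⁻` did not tend to `0` along `γ`, the `1`-thickenings of the causal pasts `J⁻(γ(-n))` would
all have measure at least some `ε > 0`. They decrease, so by continuity of `μ` from above some
point `x` lies within distance `1` of every `J⁻(γ(-n))`; since these pasts are closed and decrease,
Cantor's intersection theorem in the compact ball `closedBall x 1` gives a point `q` in all of them.
Then `γ` stays in the compact diamond `J⁺(q) ∩ J⁻(γ 0)`, so non-total imprisonment bounds its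
variation, and a curve of bounded variation in a complete space converges at `-∞`, contradicting
past-inextendibility.
-/

open Metric ENNReal

theorem nonempty_iInter_of_mem_thickening [ProperSpace X] {K : ℕ → Set X} (hK : Antitone K)
    (hcl : ∀ n, IsClosed (K n)) {x : X} {r : ℝ} (hx : ∀ n, x ∈ thickening r (K n)) :
    (⋂ n, K n).Nonempty := by
  have hball : ∀ n, (closedBall x r ∩ K n).Nonempty := fun n => by
    obtain ⟨z, hz, hxz⟩ := mem_thickening_iff.1 (hx n)
    exact ⟨z, mem_closedBall'.2 hxz.le, hz⟩
  have hcpt : IsCompact (closedBall x r ∩ K 0) := (isCompact_closedBall x r).inter_right (hcl 0)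
  obtain ⟨q, hq⟩ := hcpt.nonempty_iInter_of_sequence_nonempty_isCompact_isClosed
    (fun n => closedBall x r ∩ K n) (fun n => inter_subset_inter_right _ (hK n.le_succ))
    hball fun n => isClosed_closedBall.inter (hcl n)
  exact ⟨q, mem_iInter.2 fun n => (mem_iInter.1 hq n).2⟩

theorem nonempty_iInter_of_antitone_of_le_measure {α : Type*} [MeasurableSpace α]
    {μ : Measure α} [IsFiniteMeasure μ] {s : ℕ → Set α} (hs : Antitone s)
    (hsm : ∀ n, NullMeasurableSet (s n) μ) {c : ℝ≥0∞} (hc : c ≠ 0) (hle : ∀ n, c ≤ μ (s n)) :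
    (⋂ n, s n).Nonempty := by
  apply nonempty_of_measure_ne_zero (μ := μ)
  rw [hs.measure_iInter hsm ⟨0, measure_ne_top μ _⟩]
  exact ne_bot_of_le_ne_bot hc (le_iInf hle)

theorem nonempty_iInter_of_le_measure_thickening [ProperSpace X] [MeasurableSpace X]
    [OpensMeasurableSpace X] {μ : Measure X} [IsFiniteMeasure μ] {K : ℕ → Set X}
    (hK : Antitone K) (hcl : ∀ n, IsClosed (K n)) {r : ℝ} {c : ℝ≥0∞} (hc : c ≠ 0)
    (hle : ∀ n, c ≤ μ (thickening r (K n))) : (⋂ n, K n).Nonempty := by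
  obtain ⟨x, hx⟩ := nonempty_iInter_of_antitone_of_le_measure
    (fun m n hmn => thickening_subset_of_subset r (hK hmn))
    (fun n => isOpen_thickening.measurableSet.nullMeasurableSet) hc hle
  exact nonempty_iInter_of_mem_thickening hK hcl (mem_iInter.1 hx)

namespace LPLS

theorem IsCausalCurveOn.causal_of_le {L : LPLS X} {I : Set ℝ} {γ : ℝ → X}
    (hγ : L.IsCausalCurveOn I γ) {s t : ℝ} (hs : s ∈ I) (ht : t ∈ I) (hst : s ≤ t) :
    L.causal (γ s) (γ t) := by
  rcases hst.lt_or_eq with hlt | rfl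
  · exact hγ.2.2 hs ht hlt
  · exact L.causal_refl _

theorem NonTotallyImprisoning.boundedVariationOn {L : LPLS X} (h : L.NonTotallyImprisoning)
    {K : Set X} (hK : IsCompact K) {I : Set ℝ} {γ : ℝ → X} (hγ : L.IsCausalCurveOn I γ)
    (hγK : MapsTo γ I K) : BoundedVariationOn γ I := by
  obtain ⟨C, -, hC⟩ := h K hK
  exact ne_top_of_le_ne_top ofReal_ne_top (hC I γ hγ fun _ hs => hγK hs)

variable (L : LPLS X)

theorem jminus_subset_of_causal {x y : X} (h : L.causal x y) : L.Jminus x ⊆ L.Jminus y :=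
  fun _ hz => L.causal_trans hz h

theorem iminus_subset_jminus (p : X) : L.Iminus p ⊆ L.Jminus p :=
  fun _ => L.chron_subset_causal

section Volume

variable [MeasurableSpace X] (μ : Measure X)

theorem vminus_nonneg (r : ℝ) (p : X) : 0 ≤ L.Vminus μ r p :=
  toReal_nonneg

theorem tminus_nonneg (p : X) : 0 ≤ L.tminus μ p :=
  setIntegral_nonneg measurableSet_Ioo fun r _ => L.vminus_nonneg μ r p

variable [IsFiniteMeasure μ]

theorem vminus_mono (p : X) : Monotone fun r => L.Vminus μ r p :=
  fun _ _ hrs => toReal_mono (measure_ne_top μ _) (measure_mono (thickening_mono hrs _))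

theorem tminus_le_vminus_one (p : X) : L.tminus μ p ≤ L.Vminus μ 1 p := by
  have h := norm_setIntegral_le_of_norm_le_const (μ := volume) (s := Ioo (0:ℝ) 1)
    (f := fun r => L.Vminus μ r p) (by simp) fun r hr => by
      rw [Real.norm_of_nonneg (L.vminus_nonneg μ r p)]
      exact L.vminus_mono μ p hr.2.le
  simpa [tminus] using (le_abs_self _).trans h

theorem ofReal_tminus_le_measure_thickening_jminus (p : X) :
    ENNReal.ofReal (L.tminus μ p) ≤ μ (thickening 1 (L.Jminus p)) :=
  calc ENNReal.ofReal (L.tminus μ p) ≤ μ (thickening 1 (L.Iminus p)) :=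
        ofReal_le_of_le_toReal (L.tminus_le_vminus_one μ p)
    _ ≤ μ (thickening 1 (L.Jminus p)) :=
        measure_mono (thickening_subset_of_subset 1 (L.iminus_subset_jminus p))

theorem exists_causal_of_frequently_le_tminus [ProperSpace X] [OpensMeasurableSpace X]
    (hclosed : ∀ p, IsClosed (L.Jminus p)) {γ : ℝ → X} (hγ : L.IsCausalCurveOn (Iic 0) γ)
    {ε : ℝ} (hε : 0 < ε) (hfreq : ∃ᶠ u in atBot, ε ≤ L.tminus μ (γ u)) :
    ∃ q, ∀ u ≤ 0, L.causal q (γ u) := by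
  have hmem : ∀ n : ℕ, -(n : ℝ) ∈ Iic 0 := fun n => by simp
  have hK : Antitone fun n : ℕ => L.Jminus (γ (-n)) := fun m n hmn =>
    L.jminus_subset_of_causal (hγ.causal_of_le (hmem n) (hmem m) (by simpa using hmn))
  have hle : ∀ n : ℕ, ENNReal.ofReal ε ≤ μ (thickening 1 (L.Jminus (γ (-n)))) := by
    intro n
    obtain ⟨u, hεu, hun⟩ := (hfreq.and_eventually (eventually_le_atBot (-(n : ℝ)))).exists
    calc ENNReal.ofReal ε ≤ ENNReal.ofReal (L.tminus μ (γ u)) := ofReal_le_ofReal hεu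
      _ ≤ μ (thickening 1 (L.Jminus (γ u))) := L.ofReal_tminus_le_measure_thickening_jminus μ _
      _ ≤ μ (thickening 1 (L.Jminus (γ (-n)))) :=
          measure_mono <| thickening_subset_of_subset 1 <| L.jminus_subset_of_causal <|
            hγ.causal_of_le (hun.trans (hmem n)) (hmem n) hun
  obtain ⟨q, hq⟩ := nonempty_iInter_of_le_measure_thickening hK (fun n => hclosed _)
    (ofReal_pos.2 hε).ne' hle
  refine ⟨q, fun u hu => ?_⟩
  obtain ⟨n, hn⟩ := exists_nat_ge (-u)
  exact L.causal_trans (mem_iInter.1 hq n) (hγ.causal_of_le (hmem n) hu (by linarith))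

end Volume

end LPLS

theorem LPLS.tminus_tendsto_zero_along_pastInext_general {X : Type*} [MetricSpace X]
    [ProperSpace X] [MeasurableSpace X] [BorelSpace X]
    (L : LPLS X) (μ : Measure X) [IsProbabilityMeasure μ]
    (hnti : L.NonTotallyImprisoning)
    (hdiamonds : ∀ p q : X, IsCompact (L.Jplus p ∩ L.Jminus q))
    (hsimple : ∀ p : X, IsClosed (L.Jplus p) ∧ IsClosed (L.Jminus p))
    (γ : ℝ → X) (hγ : L.IsPastInextCurve γ) :
    Tendsto (fun s => L.tminus μ (γ s)) atBot (𝓝 0) := by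
  obtain ⟨hcurve, hinext⟩ := hγ
  by_contra hnot
  obtain ⟨ε, hε, hfreq⟩ : ∃ ε > 0, ∃ᶠ u in atBot, ε ≤ L.tminus μ (γ u) := by
    contrapose! hnot
    exact tendsto_order.2
      ⟨fun a ha => .of_forall fun u => ha.trans_le (L.tminus_nonneg μ _), hnot⟩
  obtain ⟨q, hq⟩ :=
    L.exists_causal_of_frequently_le_tminus μ (fun p => (hsimple p).2) hcurve hε hfreq
  have hbv : BoundedVariationOn γ (Iic 0) := hnti.boundedVariationOn (hdiamonds q (γ 0)) hcurve
    fun u hu => ⟨hq u hu, hcurve.causal_of_le hu self_mem_Iic hu⟩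
  have : Nonempty X := ⟨γ 0⟩
  obtain ⟨p, hp⟩ := hbv.exists_tendsto_atBot
  rw [inf_eq_right.2 (le_principal_iff.2 (Iic_mem_atBot 0))] at hp
  exact hinext p hp

/-- In a globally hyperbolic, causally simple, approximating Lorentzian pre-length
space with limit curves over a proper metric space, the averaged past volume
function tends to `0` along any past-inextendible causal curve. -/
theorem LPLS.tminus_tendsto_zero_along_pastInext {X : Type*} [MetricSpace X]
    [ProperSpace X] [MeasurableSpace X] [BorelSpace X]
    (L : LPLS X) (μ : Measure X) [IsProbabilityMeasure μ]
    (hfull : LPLS.FullSupport μ) (happ : L.Approximating) (hlc : L.HasLimitCurves)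
    (hnti : L.NonTotallyImprisoning)
    (hdiamonds : ∀ p q : X, IsCompact (L.Jplus p ∩ L.Jminus q))
    (hsimple : ∀ p : X, IsClosed (L.Jplus p) ∧ IsClosed (L.Jminus p))
    (γ : ℝ → X) (hγ : L.IsPastInextCurve γ) :
    Tendsto (fun s => L.tminus μ (γ s)) atBot (𝓝 0) :=
  LPLS.tminus_tendsto_zero_along_pastInext_general L μ hnti hdiamonds hsimple γ hγ
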